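/- arXiv:1806.06903 — 3 statements merged into one kernel-verified Lean document; each statement's English description precedes it below -/
import Mathlib

section
/- Let c > 0 and let G be an oriented graph on n vertices with minimum semidegree δ⁰(G) ≥ (1/2 - c)n. Then for every pair of disjoint vertex subsets A and B, the sum over all edges uv directed from A to B of the number of cyclic triangles containing both u and v is at least e⁺(A,B)²/(2|A|) - cn³. -/
open Finset
open scoped Classical

/-- An oriented graph: no loops and no pair of antiparallel edges. -/
def IsOriented {n : ℕ} (G : Fin n → Fin n → Prop) : Prop :=
  (∀ v, ¬ G v v) ∧ ∀ u v : Fin n, G u v → ¬ G v u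

/-- `d⁺(v, A)`: number of out-neighbors of `v` in `A`. -/
noncomputable def outDegOn {n : ℕ} (G : Fin n → Fin n → Prop) (v : Fin n)
    (A : Finset (Fin n)) : ℕ :=
  (A.filter fun u => G v u).card

/-- `d⁻(v, A)`: number of in-neighbors of `v` in `A`. -/
noncomputable def inDegOn {n : ℕ} (G : Fin n → Fin n → Prop) (v : Fin n)
    (A : Finset (Fin n)) : ℕ :=
  (A.filter fun u => G u v).card

/-- outdegree `d⁺(v)`. -/
noncomputable def outDeg {n : ℕ} (G : Fin n → Fin n → Prop) (v : Fin n) : ℕ :=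
  outDegOn G v univ

/-- indegree `d⁻(v)`. -/
noncomputable def inDeg {n : ℕ} (G : Fin n → Fin n → Prop) (v : Fin n) : ℕ :=
  inDegOn G v univ

/-- The minimum semidegree condition `δ⁰(G) ≥ b`. -/
def MinSemidegreeGE {n : ℕ} (G : Fin n → Fin n → Prop) (b : ℝ) : Prop :=
  ∀ v : Fin n, b ≤ (outDeg G v : ℝ) ∧ b ≤ (inDeg G v : ℝ)

/-- `e⁺(A, B)`: number of edges directed from `A` to `B`. -/
noncomputable def eOut {n : ℕ} (G : Fin n → Fin n → Prop) (A B : Finset (Fin n)) : ℕ :=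
  ∑ a ∈ A, outDegOn G a B

/-- `s` is the vertex set of a cyclic triangle. -/
def IsCycTri {n : ℕ} (G : Fin n → Fin n → Prop) (s : Finset (Fin n)) : Prop :=
  ∃ a b c : Fin n, G a b ∧ G b c ∧ G c a ∧ s = {a, b, c}

/-- `s` is the vertex set of a transitive triangle. -/
def IsTrnTri {n : ℕ} (G : Fin n → Fin n → Prop) (s : Finset (Fin n)) : Prop :=
  ∃ a b c : Fin n, G a b ∧ G b c ∧ G a c ∧ s = {a, b, c}

/-- `cyc(A)`: number of cyclic triangles with all vertices in `A`. -/
noncomputable def cycIn {n : ℕ} (G : Fin n → Fin n → Prop) (A : Finset (Fin n)) : ℕ :=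
  ((A.powersetCard 3).filter fun s => IsCycTri G s).card

/-- `trn(A)`: number of transitive triangles with all vertices in `A`. -/
noncomputable def trnIn {n : ℕ} (G : Fin n → Fin n → Prop) (A : Finset (Fin n)) : ℕ :=
  ((A.powersetCard 3).filter fun s => IsTrnTri G s).card

/-- `cyc(A, B, C)`: number of cyclic triangles with one vertex in each of `A`, `B`, `C`
(in the sense of some labeling of its vertex set). -/
noncomputable def cyc3 {n : ℕ} (G : Fin n → Fin n → Prop) (A B C : Finset (Fin n)) : ℕ :=
  (((univ : Finset (Fin n)).powersetCard 3).filter fun s =>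
    IsCycTri G s ∧ ∃ x ∈ A, ∃ y ∈ B, ∃ z ∈ C, s = ({x, y, z} : Finset (Fin n))).card

/-- A cyclic triangle tiling: a collection of vertex-disjoint cyclic triangles. -/
def IsCycTiling {n : ℕ} (G : Fin n → Fin n → Prop) (C : Finset (Finset (Fin n))) : Prop :=
  (∀ s ∈ C, IsCycTri G s) ∧ ∀ s ∈ C, ∀ t ∈ C, s ≠ t → Disjoint s t

/-- A cyclic triangle factor: a tiling covering every vertex. -/
def IsCycFactor {n : ℕ} (G : Fin n → Fin n → Prop) (C : Finset (Finset (Fin n))) : Prop :=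
  IsCycTiling G C ∧ C.biUnion id = univ

/-- `W` can be perfectly covered by vertex-disjoint cyclic triangles
(i.e. `H(G)[W]` has a perfect matching). -/
def HasCycPM {n : ℕ} (G : Fin n → Fin n → Prop) (W : Finset (Fin n)) : Prop :=
  ∃ C : Finset (Finset (Fin n)), IsCycTiling G C ∧ C.biUnion id = W

/-- The number of `(H(G), x, y)`-linking `(3ℓ-1)`-sets. -/
noncomputable def linkCount {n : ℕ} (G : Fin n → Fin n → Prop) (ℓ : ℕ) (x y : Fin n) : ℕ :=
  (((univ : Finset (Fin n)).powersetCard (3 * ℓ - 1)).filter fun S =>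
    x ∉ S ∧ y ∉ S ∧ HasCycPM G (insert x S) ∧ HasCycPM G (insert y S)).card
/-!
For `u ∈ A` let `R = N⁺(u) ∩ B` and `k = |R|`. For `v ∈ R` the set `N⁻(u) ∪ N⁺(v)` misses `u`
and `R \ N⁺(v)`, so inclusion–exclusion gives
`|N⁻(u) ∩ N⁺(v)| ≥ d⁺(v) + d⁻(u) + 1 + k - d⁺(v, R) - n`.
Summing over `v ∈ R`, and using that `R` spans at most `k(k-1)/2` edges, gives at least
`k²/2 - 2cnk` cyclic triangles through the edges leaving `u`. Summing over `u ∈ A`,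
Cauchy–Schwarz turns `∑ k_u²` into `e⁺(A,B)²/|A|`, and `e⁺(A,B) ≤ n²/4` absorbs the error.
-/

section OrientedGraph

variable {n : ℕ} {G : Fin n → Fin n → Prop}

theorem outDeg_add_inDeg_add_card_le (hG : IsOriented G) {u v : Fin n} {R : Finset (Fin n)}
    (hR : ∀ w ∈ R, G u w) (hv : v ∈ R) :
    outDeg G v + inDeg G u + #R + 1 ≤
      n + outDegOn G v R + #(univ.filter fun w => G w u ∧ G v w) := by
  obtain ⟨hloop, hanti⟩ := hG
  set I := univ.filter fun w => G w u
  set O := univ.filter fun w => G v w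
  set T := R.filter fun w => ¬ G v w
  have huR : u ∉ R := fun h => hloop u (hR u h)
  have hu : u ∉ I ∪ O ∪ T := by
    simp [I, O, T, hloop u, hanti u v (hR v hv), huR]
  have hdisj : Disjoint (I ∪ O) T := by
    rw [disjoint_left]
    intro w hw hwT
    simp only [I, O, T, mem_union, mem_filter, mem_univ, true_and] at hw hwT
    rcases hw with hw | hw
    · exact hanti _ _ (hR w hwT.1) hw
    · exact hwT.2 hw
  have hcover : #(insert u (I ∪ O ∪ T)) ≤ n := by
    simpa using card_le_univ (insert u (I ∪ O ∪ T))
  rw [card_insert_of_notMem hu, card_union_of_disjoint hdisj] at hcover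
  have hI : inDeg G u = #I := rfl
  have hO : outDeg G v = #O := rfl
  have hT : outDegOn G v R + #T = #R := card_filter_add_card_filter_not _
  have hIO : #(univ.filter fun w => G w u ∧ G v w) = #(I ∩ O) := by rw [filter_and]
  have := card_union_add_card_inter I O
  omega

theorem two_mul_eOut_self_add_card_le (hG : IsOriented G) (R : Finset (Fin n)) :
    2 * eOut G R R + #R ≤ #R ^ 2 := by
  obtain ⟨hloop, hanti⟩ := hG
  have hpair : ∀ v w, (if G v w then 1 else 0) + (if G w v then 1 else 0)
      + (if v = w then 1 else 0) ≤ 1 := by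
    intro v w
    by_cases hvw : v = w
    · subst hvw; simp [hloop]
    · by_cases h : G v w
      · simp [h, hvw, hanti v w h]
      · by_cases h' : G w v <;> simp [h, h', hvw]
  have hout : ∑ v ∈ R, ∑ w ∈ R, (if G v w then 1 else 0) = eOut G R R := by
    simp only [eOut, outDegOn, card_filter]
  have hin : ∑ v ∈ R, ∑ w ∈ R, (if G w v then 1 else 0) = eOut G R R := by
    rw [sum_comm, hout]
  have hdiag : ∑ v ∈ R, ∑ w ∈ R, (if v = w then 1 else 0) = #R := by simp
  calc 2 * eOut G R R + #R
      = ∑ v ∈ R, ∑ w ∈ R, ((if G v w then 1 else 0) + (if G w v then 1 else 0)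
          + (if v = w then 1 else 0)) := by
        simp only [sum_add_distrib, hout, hin, hdiag]
        ring
    _ ≤ ∑ v ∈ R, ∑ w ∈ R, 1 := sum_le_sum fun v _ => sum_le_sum fun w _ => hpair v w
    _ = #R ^ 2 := by simp [sq]

theorem sq_div_two_sub_le_sum_cyclic_triangles (hG : IsOriented G) {c : ℝ}
    (hdeg : MinSemidegreeGE G ((1/2 - c) * n)) {u : Fin n} {R : Finset (Fin n)}
    (hR : ∀ v ∈ R, G u v) :
    (#R : ℝ) ^ 2 / 2 - 2 * c * n * #R ≤
      ∑ v ∈ R, (#(univ.filter fun w => G w u ∧ G v w) : ℝ) := by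
  have hedge : ∀ v ∈ R, (1 - 2 * c) * n + #R + 1 - n - outDegOn G v R ≤
      (#(univ.filter fun w => G w u ∧ G v w) : ℝ) := by
    intro v hv
    have h : ((outDeg G v + inDeg G u + #R + 1 : ℕ) : ℝ) ≤
        ((n + outDegOn G v R + #(univ.filter fun w => G w u ∧ G v w) : ℕ) : ℝ) := by
      exact_mod_cast outDeg_add_inDeg_add_card_le hG hR hv
    push_cast at h
    linarith [(hdeg v).1, (hdeg u).2]
  have hinside : (2 * eOut G R R + #R : ℝ) ≤ #R ^ 2 := by
    exact_mod_cast two_mul_eOut_self_add_card_le hG R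
  have hsum := sum_le_sum hedge
  rw [sum_sub_distrib, sum_const, nsmul_eq_mul] at hsum
  rw [eOut, Nat.cast_sum] at hinside
  nlinarith

theorem four_mul_eOut_le_sq {A B : Finset (Fin n)} (hAB : Disjoint A B) :
    4 * eOut G A B ≤ n ^ 2 := by
  have he : eOut G A B ≤ #A * #B := by
    calc eOut G A B ≤ ∑ _a ∈ A, #B := sum_le_sum fun a _ => card_filter_le _ _
      _ = #A * #B := by rw [sum_const, smul_eq_mul]
  have hab : #A + #B ≤ n := by
    rw [← card_union_of_disjoint hAB]
    simpa using card_le_univ (A ∪ B)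
  zify at he hab ⊢
  nlinarith [sq_nonneg ((#A : ℤ) - #B)]

end OrientedGraph

theorem stmt_3 (c : ℝ) (hc : 0 < c) (n : ℕ) (G : Fin n → Fin n → Prop)
    (hG : IsOriented G) (hdeg : MinSemidegreeGE G ((1/2 - c) * n)) :
    ∀ A B : Finset (Fin n), Disjoint A B →
      (eOut G A B : ℝ)^2 / (2 * A.card) - c * n^3 ≤
        ∑ u ∈ A, ∑ v ∈ B.filter (fun v => G u v),
          (((univ : Finset (Fin n)).filter fun w => G w u ∧ G v w).card : ℝ) := by
  intro A B hAB
  have hsmall : (4 * eOut G A B : ℝ) ≤ n ^ 2 := by exact_mod_cast four_mul_eOut_le_sq hAB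
  set e : ℝ := (eOut G A B : ℝ)
  have he : e = ∑ u ∈ A, (#(B.filter fun v => G u v) : ℝ) := by
    simp [e, eOut, outDegOn]
  have hcs : e ^ 2 / #A ≤ ∑ u ∈ A, (#(B.filter fun v => G u v) : ℝ) ^ 2 := by
    simpa [he] using sq_sum_div_le_sum_sq_div A (fun u => (#(B.filter fun v => G u v) : ℝ))
      (g := fun _ => 1) (by simp)
  have hpoint := sum_le_sum fun u (_ : u ∈ A) =>
    sq_div_two_sub_le_sum_cyclic_triangles hG hdeg (u := u) (R := B.filter fun v => G u v)
      (by simp)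
  rw [sum_sub_distrib, ← sum_div, ← mul_sum, ← he] at hpoint
  have hcn : 0 ≤ c * n := by positivity
  rw [mul_comm, ← div_div]
  nlinarith [mul_le_mul_of_nonneg_left hsmall hcn]
end

section
/- Let G be an oriented graph on n vertices with a divisibility barrier partition {V₁, V₂, V₃}: no edges are directed from V₂ to V₁, from V₃ to V₂, or from V₁ to V₃, and the sizes |V₁|, |V₂|, |V₃| are not all congruent modulo 3. Then G has no cyclic triangle factor. -/
open Finset
open scoped Classical

/-!
Label the vertices of `V₁`, `V₂`, `V₃` by `0, 1, 2 ∈ ZMod 3`. Every edge keeps the label or raises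
it by one, and the three increments around a cyclic triangle sum to `0`, so they are all `0` or
all `1`: the triangle lies in one part or meets every part once. Either way its labels sum to `0`
in `ZMod 3`. Summing over a cyclic triangle factor gives `|V₂| + 2|V₃| ≡ 0`, and together with
`|V₁| + |V₂| + |V₃| = n ≡ 0` this forces `|V₁| ≡ |V₂| ≡ |V₃| (mod 3)`.
-/

def IsCyclicLayering {n : ℕ} (G : Fin n → Fin n → Prop) (p : Fin n → ZMod 3) : Prop :=
  ∀ u v, G u v → p v = p u ∨ p v = p u + 1

theorem ZMod.add_add_eq_zero_of_cyclic_steps :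
    ∀ x y z : ZMod 3, (y = x ∨ y = x + 1) → (z = y ∨ z = y + 1) → (x = z ∨ x = z + 1) →
      x + y + z = 0 := by
  decide

section CyclicTriangles

variable {n : ℕ} {G : Fin n → Fin n → Prop}

theorem ne_of_adj_of_loopless (hloop : ∀ v, ¬ G v v) {u v : Fin n} (h : G u v) : u ≠ v := by
  rintro rfl
  exact hloop u h

theorem IsCycTri.card_eq_three (hloop : ∀ v, ¬ G v v) {s : Finset (Fin n)}
    (hs : IsCycTri G s) : s.card = 3 := by
  obtain ⟨a, b, c, hab, hbc, hca, rfl⟩ := hs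
  exact Finset.card_eq_three.2 ⟨a, b, c, ne_of_adj_of_loopless hloop hab,
    (ne_of_adj_of_loopless hloop hca).symm, ne_of_adj_of_loopless hloop hbc, rfl⟩

theorem IsCycTri.sum_eq_zero (hloop : ∀ v, ¬ G v v) {p : Fin n → ZMod 3}
    (hp : IsCyclicLayering G p) {s : Finset (Fin n)} (hs : IsCycTri G s) :
    ∑ v ∈ s, p v = 0 := by
  obtain ⟨a, b, c, hab, hbc, hca, rfl⟩ := hs
  have ha : a ∉ ({b, c} : Finset (Fin n)) := by
    simp [ne_of_adj_of_loopless hloop hab, (ne_of_adj_of_loopless hloop hca).symm]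
  rw [sum_insert ha, sum_pair (ne_of_adj_of_loopless hloop hbc), ← add_assoc]
  exact ZMod.add_add_eq_zero_of_cyclic_steps _ _ _ (hp _ _ hab) (hp _ _ hbc) (hp _ _ hca)

variable {C : Finset (Finset (Fin n))}

theorem IsCycFactor.sum_eq_sum_sum {M : Type*} [AddCommMonoid M] (hC : IsCycFactor G C)
    (f : Fin n → M) : ∑ v, f v = ∑ s ∈ C, ∑ v ∈ s, f v := by
  rw [← hC.2]
  exact sum_biUnion fun s hs t ht hst => hC.1.2 s hs t ht hst

theorem IsCycFactor.card_eq_three_mul (hloop : ∀ v, ¬ G v v) (hC : IsCycFactor G C) :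
    n = 3 * C.card :=
  calc n = ∑ _v : Fin n, 1 := by simp
    _ = ∑ s ∈ C, s.card := by simp [hC.sum_eq_sum_sum]
    _ = ∑ _s ∈ C, 3 := sum_congr rfl fun s hs => (hC.1.1 s hs).card_eq_three hloop
    _ = 3 * C.card := by rw [sum_const, smul_eq_mul, mul_comm]

theorem IsCycFactor.sum_eq_zero (hloop : ∀ v, ¬ G v v) {p : Fin n → ZMod 3}
    (hp : IsCyclicLayering G p) (hC : IsCycFactor G C) : ∑ v, p v = 0 := by
  rw [hC.sum_eq_sum_sum]
  exact Finset.sum_eq_zero fun s hs => (hC.1.1 s hs).sum_eq_zero hloop hp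

end CyclicTriangles

section Layers

variable {α : Type*} [DecidableEq α] {V1 V2 V3 : Finset α} {v : α}

def layerOf (V1 V2 : Finset α) (v : α) : ZMod 3 :=
  if v ∈ V1 then 0 else if v ∈ V2 then 1 else 2

theorem layerOf_of_mem_left (hv : v ∈ V1) : layerOf V1 V2 v = 0 :=
  if_pos hv

theorem layerOf_of_mem_mid (h12 : Disjoint V1 V2) (hv : v ∈ V2) : layerOf V1 V2 v = 1 := by
  simp [layerOf, disjoint_right.1 h12 hv, hv]

theorem layerOf_of_mem_right (h13 : Disjoint V1 V3) (h23 : Disjoint V2 V3) (hv : v ∈ V3) :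
    layerOf V1 V2 v = 2 := by
  simp [layerOf, disjoint_right.1 h13 hv, disjoint_right.1 h23 hv]

theorem sum_layerOf [Fintype α] (h12 : Disjoint V1 V2) (h13 : Disjoint V1 V3)
    (h23 : Disjoint V2 V3) (hcover : V1 ∪ V2 ∪ V3 = univ) :
    ∑ v, layerOf V1 V2 v = V2.card + 2 * V3.card := by
  rw [← hcover, sum_union (disjoint_union_left.2 ⟨h13, h23⟩), sum_union h12,
    sum_congr rfl fun v => layerOf_of_mem_left, sum_congr rfl fun v => layerOf_of_mem_mid h12,
    sum_congr rfl fun v => layerOf_of_mem_right h13 h23]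
  simp [mul_comm]

theorem card_eq_add_add_of_partition [Fintype α] (h12 : Disjoint V1 V2) (h13 : Disjoint V1 V3)
    (h23 : Disjoint V2 V3) (hcover : V1 ∪ V2 ∪ V3 = univ) :
    Fintype.card α = V1.card + V2.card + V3.card := by
  rw [← card_univ, ← hcover, card_union_of_disjoint (disjoint_union_left.2 ⟨h13, h23⟩),
    card_union_of_disjoint h12]

end Layers

theorem isCyclicLayering_layerOf {n : ℕ} {G : Fin n → Fin n → Prop} {V1 V2 V3 : Finset (Fin n)}
    (h12 : Disjoint V1 V2) (h13 : Disjoint V1 V3) (h23 : Disjoint V2 V3)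
    (hcover : V1 ∪ V2 ∪ V3 = univ)
    (e21 : ∀ x ∈ V2, ∀ y ∈ V1, ¬ G x y) (e32 : ∀ x ∈ V3, ∀ y ∈ V2, ¬ G x y)
    (e13 : ∀ x ∈ V1, ∀ y ∈ V3, ¬ G x y) :
    IsCyclicLayering G (layerOf V1 V2) := by
  have mem : ∀ w, w ∈ V1 ∨ w ∈ V2 ∨ w ∈ V3 := fun w => by
    simpa only [← hcover, mem_union, or_assoc] using mem_univ w
  intro u v huv
  rcases mem u with hu | hu | hu <;> rcases mem v with hv | hv | hv <;>
    simp only [layerOf_of_mem_left, layerOf_of_mem_mid h12, layerOf_of_mem_right h13 h23, hu, hv]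
  all_goals first
    | exact absurd huv (e21 u hu v hv)
    | exact absurd huv (e32 u hu v hv)
    | exact absurd huv (e13 u hu v hv)
    | decide

theorem stmt_5 (n : ℕ) (G : Fin n → Fin n → Prop) (hG : IsOriented G)
    (V1 V2 V3 : Finset (Fin n))
    (h12 : Disjoint V1 V2) (h13 : Disjoint V1 V3) (h23 : Disjoint V2 V3)
    (hcover : V1 ∪ V2 ∪ V3 = univ)
    (e21 : ∀ x ∈ V2, ∀ y ∈ V1, ¬ G x y)
    (e32 : ∀ x ∈ V3, ∀ y ∈ V2, ¬ G x y)
    (e13 : ∀ x ∈ V1, ∀ y ∈ V3, ¬ G x y)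
    (hmod : ¬ (V1.card % 3 = V2.card % 3 ∧ V2.card % 3 = V3.card % 3)) :
    ¬ ∃ C : Finset (Finset (Fin n)), IsCycFactor G C := by
  rintro ⟨C, hC⟩
  have hsum : (V2.card + 2 * V3.card : ZMod 3) = 0 := by
    rw [← sum_layerOf h12 h13 h23 hcover]
    exact hC.sum_eq_zero hG.1 (isCyclicLayering_layerOf h12 h13 h23 hcover e21 e32 e13)
  have h3 : (3 : ZMod 3) = 0 := rfl
  have hcard : (V1.card + V2.card + V3.card : ZMod 3) = 0 := by
    have hn : V1.card + V2.card + V3.card = 3 * C.card := by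
      rw [← card_eq_add_add_of_partition h12 h13 h23 hcover, Fintype.card_fin]
      exact hC.card_eq_three_mul hG.1
    rw [← Nat.cast_add, ← Nat.cast_add, hn, Nat.cast_mul, Nat.cast_ofNat, h3, zero_mul]
  simp only [← ZMod.natCast_eq_natCast_iff'] at hmod
  exact hmod ⟨by linear_combination hcard - 2 * hsum + V3.card * h3,
    by linear_combination hsum - V3.card * h3⟩
end

section
/- Suppose 1/n ≪ c ≪ α ≪ β ≪ ξ ≪ η < 1 and G is an oriented graph on n vertices with δ⁰(G) ≥ (1/2 - c)n. If A ⊆ V(G) with |A| > ηn and cyc(A, A, Ā) ≤ αn³, then the set S of vertices outside A that lie in neither the strong β-out-neighborhood nor the strong β-in-neighborhood of A has size at most βn. -/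
open Finset
open scoped Classical

/-!
Each `x ∈ S` has at least `βn/2` in- and out-neighbours in `A`: `I = N⁻_A(x)`, `O = N⁺_A(x)`.
If few edges ran from `O` back to `I`, almost every pair `u ∈ I`, `v ∈ O` would be an edge
`u → v`, and by the semidegree condition such an edge lies on at least
`d⁻_A(v) - d⁻_A(u) - 2cn` cyclic triangles `u → v → z → u` with `z ∉ A`. Summing over `I × O`,
`d⁻_A(v)` averages at least about `|I|` on `O` while `d⁻_A(u)` averages at most about `|I|/2` on
`I`, so there would be about `|I|²|O|/2 ≥ β³n³/16 ≫ αn³` such triangles. Hence every `x ∈ S`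
has `≳ β³n²` edges from `O` to `I`, i.e. lies on that many cyclic triangles `x → u → v → x`
with `u, v ∈ A`; these triangles are distinct for distinct `x`, so `|S| β³n² ≲ αn³`.
-/

section
variable {n : ℕ} {G : Fin n → Fin n → Prop} {c α β : ℝ}

theorem cast_card_le (B : Finset (Fin n)) : (#B : ℝ) ≤ n := by
  exact_mod_cast (card_le_univ B).trans_eq (Fintype.card_fin n)

theorem cast_card_add_card_compl (B : Finset (Fin n)) : (#B : ℝ) + #Bᶜ = n := by
  exact_mod_cast (card_add_card_compl B).trans (Fintype.card_fin n)

theorem outDegOn_add_inDegOn_le (hG : IsOriented G) (v : Fin n) (B : Finset (Fin n)) :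
    outDegOn G v B + inDegOn G v B ≤ #B := by
  rw [outDegOn, inDegOn, ← card_union_of_disjoint]
  · exact card_le_card (union_subset (filter_subset _ _) (filter_subset _ _))
  · exact disjoint_filter.2 fun u _ hvu huv => hG.2 v u hvu huv

theorem outDegOn_add_outDegOn_compl (v : Fin n) (B : Finset (Fin n)) :
    outDegOn G v B + outDegOn G v Bᶜ = outDeg G v := by
  rw [outDeg, outDegOn, outDegOn, outDegOn, ← card_union_of_disjoint
    (disjoint_filter_filter disjoint_compl_right), ← filter_union, union_compl]

theorem inDegOn_add_inDegOn_compl (v : Fin n) (B : Finset (Fin n)) :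
    inDegOn G v B + inDegOn G v Bᶜ = inDeg G v := by
  rw [inDeg, inDegOn, inDegOn, inDegOn, ← card_union_of_disjoint
    (disjoint_filter_filter disjoint_compl_right), ← filter_union, union_compl]

theorem inDegOn_mono (v : Fin n) {B C : Finset (Fin n)} (h : B ⊆ C) :
    inDegOn G v B ≤ inDegOn G v C :=
  card_le_card (filter_subset_filter _ h)

theorem inDegOn_union_le (v : Fin n) (B C : Finset (Fin n)) :
    inDegOn G v (B ∪ C) ≤ inDegOn G v B + inDegOn G v C := by
  rw [inDegOn, filter_union]
  exact card_union_le _ _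

theorem inDegOn_le_card (v : Fin n) (B : Finset (Fin n)) : inDegOn G v B ≤ #B :=
  card_filter_le _ _

theorem card_sub_le_outDegOn_add_inDegOn (hG : IsOriented G)
    (hδ : MinSemidegreeGE G ((1/2 - c) * n)) (v : Fin n) (B : Finset (Fin n)) :
    (#B : ℝ) - 2 * c * n ≤ outDegOn G v B + inDegOn G v B := by
  have hout : (outDegOn G v B : ℝ) + outDegOn G v Bᶜ = outDeg G v := by
    exact_mod_cast outDegOn_add_outDegOn_compl v B
  have hin : (inDegOn G v B : ℝ) + inDegOn G v Bᶜ = inDeg G v := by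
    exact_mod_cast inDegOn_add_inDegOn_compl v B
  have hcompl : (outDegOn G v Bᶜ : ℝ) + inDegOn G v Bᶜ ≤ #Bᶜ := by
    exact_mod_cast outDegOn_add_inDegOn_le hG v Bᶜ
  linarith [hδ v, cast_card_add_card_compl B]

theorem inDegOn_sub_inDegOn_le_card_filter (hG : IsOriented G)
    (hδ : MinSemidegreeGE G ((1/2 - c) * n)) (A : Finset (Fin n)) (u v : Fin n) :
    (inDegOn G v A : ℝ) - inDegOn G u A - 2 * c * n ≤ #{z ∈ Aᶜ | G v z ∧ G z u} := by
  have hinter : outDegOn G v Aᶜ + inDegOn G u Aᶜ ≤ #Aᶜ + #{z ∈ Aᶜ | G v z ∧ G z u} := by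
    rw [outDegOn, inDegOn, filter_and, ← card_union_add_card_inter]
    gcongr
    exact union_subset (filter_subset _ _) (filter_subset _ _)
  have hinter' : (outDegOn G v Aᶜ : ℝ) + inDegOn G u Aᶜ ≤ #Aᶜ + #{z ∈ Aᶜ | G v z ∧ G z u} := by
    exact_mod_cast hinter
  have hout : (outDegOn G v A : ℝ) + outDegOn G v Aᶜ = outDeg G v := by
    exact_mod_cast outDegOn_add_outDegOn_compl v A
  have hin : (inDegOn G u A : ℝ) + inDegOn G u Aᶜ = inDeg G u := by
    exact_mod_cast inDegOn_add_inDegOn_compl u A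
  have hv : (outDegOn G v A : ℝ) + inDegOn G v A ≤ #A := by
    exact_mod_cast outDegOn_add_inDegOn_le hG v A
  linarith [(hδ v).1, (hδ u).2, cast_card_add_card_compl A]

theorem inDegOn_le_inDegOn_nbrs_add (hG : IsOriented G)
    (hδ : MinSemidegreeGE G ((1/2 - c) * n)) (A : Finset (Fin n)) (x u : Fin n) :
    (inDegOn G u A : ℝ) ≤
      inDegOn G u {w ∈ A | G w x} + inDegOn G u {w ∈ A | G x w} + 2 * c * n := by
  set I := {w ∈ A | G w x}
  set O := {w ∈ A | G x w}
  have hIO : I ∪ O ⊆ A := union_subset (filter_subset _ _) (filter_subset _ _)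
  have hcard : #(A \ (I ∪ O)) + (#I + #O) = #A := by
    rw [← card_union_of_disjoint (disjoint_filter.2 fun w _ hwx hxw => hG.2 w x hwx hxw),
      card_sdiff_add_card_eq_card hIO]
  have hle : inDegOn G u A ≤ inDegOn G u I + inDegOn G u O + #(A \ (I ∪ O)) :=
    calc inDegOn G u A = inDegOn G u ((I ∪ O) ∪ (A \ (I ∪ O))) := by
          rw [union_sdiff_of_subset hIO]
      _ ≤ inDegOn G u (I ∪ O) + inDegOn G u (A \ (I ∪ O)) := inDegOn_union_le _ _ _
      _ ≤ _ := add_le_add (inDegOn_union_le _ _ _) (inDegOn_le_card _ _)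
  have hcard' : (#(A \ (I ∪ O)) : ℝ) + (#I + #O) = #A := by exact_mod_cast hcard
  have hle' : (inDegOn G u A : ℝ) ≤ inDegOn G u I + inDegOn G u O + #(A \ (I ∪ O)) := by
    exact_mod_cast hle
  have hx : (#A : ℝ) - 2 * c * n ≤ #O + #I := card_sub_le_outDegOn_add_inDegOn hG hδ x A
  linarith

theorem eOut_eq_sum_inDegOn (X Y : Finset (Fin n)) :
    eOut G X Y = ∑ y ∈ Y, inDegOn G y X := by
  simp only [eOut, outDegOn, inDegOn, card_filter]
  exact sum_comm

theorem eOut_add_eOut_le (hG : IsOriented G) (X Y : Finset (Fin n)) :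
    eOut G X Y + eOut G Y X ≤ #X * #Y := by
  rw [eOut_eq_sum_inDegOn Y X, eOut, ← sum_add_distrib, card_eq_sum_ones X, sum_mul, one_mul]
  exact sum_le_sum fun x _ => outDegOn_add_inDegOn_le hG x Y

theorem card_mul_sub_le_eOut_add_eOut (hG : IsOriented G)
    (hδ : MinSemidegreeGE G ((1/2 - c) * n)) (X Y : Finset (Fin n)) :
    (#X : ℝ) * (#Y - 2 * c * n) ≤ eOut G X Y + eOut G Y X := by
  rw [eOut_eq_sum_inDegOn Y X, eOut]
  push_cast
  rw [← sum_add_distrib]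
  have := sum_le_sum fun x (_ : x ∈ X) => card_sub_le_outDegOn_add_inDegOn hG hδ x Y
  rwa [sum_const, nsmul_eq_mul] at this

/-- Each triangle counted by `cyc3 G A A Aᶜ` appears here exactly once: `z` is its vertex outside
`A`, and the orientation of the edge inside `A` fixes the order of `u` and `v`. -/
noncomputable def cycTriples (G : Fin n → Fin n → Prop) (A : Finset (Fin n)) :
    Finset (Fin n × Fin n × Fin n) :=
  {t ∈ A ×ˢ A ×ˢ Aᶜ | G t.1 t.2.1 ∧ G t.2.1 t.2.2 ∧ G t.2.2 t.1}

theorem card_cycTriples_le_cyc3 (hG : IsOriented G) (A : Finset (Fin n)) :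
    #(cycTriples G A) ≤ cyc3 G A A Aᶜ := by
  refine card_le_card_of_injOn (fun t => {t.1, t.2.1, t.2.2}) ?_ ?_
  · rintro ⟨u, v, z⟩ ht
    simp only [cycTriples, coe_filter, Set.mem_ofPred_eq, mem_product, mem_compl] at ht
    obtain ⟨⟨hu, hv, hz⟩, huv, hvz, hzu⟩ := ht
    simp only [coe_filter, Set.mem_ofPred_eq, mem_powersetCard]
    refine ⟨⟨subset_univ _, ?_⟩, ⟨u, v, z, huv, hvz, hzu, rfl⟩,
      u, hu, v, hv, z, mem_compl.2 hz, rfl⟩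
    exact card_eq_three.2 ⟨u, v, z, fun h => hG.1 u (h ▸ huv), by rintro rfl; exact hz hu,
      by rintro rfl; exact hz hv, rfl⟩
  · rintro ⟨u, v, z⟩ ht ⟨u', v', z'⟩ ht' h
    simp only [cycTriples, coe_filter, Set.mem_ofPred_eq, mem_product, mem_compl] at ht ht'
    simp only [Finset.ext_iff, mem_insert, mem_singleton] at h
    have hu' := (h u').2 (.inl rfl)
    have hv' := (h v').2 (.inr (.inl rfl))
    have hz' := (h z').2 (.inr (.inr rfl))
    have := hG.1
    have := hG.2
    grind

theorem card_cycTriples (A : Finset (Fin n)) :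
    #(cycTriples G A) = ∑ u ∈ A, ∑ v ∈ A, #{z ∈ Aᶜ | G u v ∧ G v z ∧ G z u} := by
  simp only [cycTriples, card_filter, sum_product]

theorem sum_eOut_outNbrs_inNbrs (A : Finset (Fin n)) :
    ∑ z ∈ Aᶜ, eOut G {u ∈ A | G z u} {v ∈ A | G v z} = #(cycTriples G A) := by
  simp only [card_cycTriples, eOut, outDegOn, card_filter, sum_filter]
  rw [sum_comm]
  refine sum_congr rfl fun u _ => ?_
  rw [sum_comm (s := A) (t := Aᶜ)]
  refine sum_congr rfl fun z _ => ?_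
  split_ifs with hzu
  · exact sum_congr rfl fun v _ => by simp only [hzu, true_and, ← ite_and, and_comm]
  · simp [hzu]

theorem sum_sum_card_filter_le_card_cycTriples {A I O : Finset (Fin n)} (hI : I ⊆ A)
    (hO : O ⊆ A) :
    ∑ u ∈ I, ∑ v ∈ O, #{z ∈ Aᶜ | G u v ∧ G v z ∧ G z u} ≤ #(cycTriples G A) := by
  rw [card_cycTriples]
  exact (sum_le_sum fun u _ => sum_le_sum_of_subset hO).trans (sum_le_sum_of_subset hI)

theorem card_mul_sum_inDegOn_sub_le_card_cycTriples (hG : IsOriented G)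
    (hδ : MinSemidegreeGE G ((1/2 - c) * n)) (hc : 0 ≤ c) {A I O : Finset (Fin n)}
    (hI : I ⊆ A) (hO : O ⊆ A) :
    #I * ∑ v ∈ O, (inDegOn G v A : ℝ) - #O * ∑ u ∈ I, (inDegOn G u A : ℝ) -
      (2 * c * n + n) * #I * #O + n * eOut G I O ≤ #(cycTriples G A) := by
  have hT : ∑ u ∈ I, ∑ v ∈ O, (#{z ∈ Aᶜ | G u v ∧ G v z ∧ G z u} : ℝ) ≤ #(cycTriples G A) := by
    exact_mod_cast sum_sum_card_filter_le_card_cycTriples hI hO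
  -- The term `n * [u → v] - n` makes the pointwise bound hold on all of `I × O`.
  have hsum : ∑ u ∈ I, ∑ v ∈ O, ((inDegOn G v A : ℝ) - inDegOn G u A - 2 * c * n - n +
      n * (if G u v then 1 else 0)) = #I * ∑ v ∈ O, (inDegOn G v A : ℝ) -
      #O * ∑ u ∈ I, (inDegOn G u A : ℝ) - (2 * c * n + n) * #I * #O + n * eOut G I O := by
    simp only [sum_add_distrib, sum_sub_distrib, sum_const, nsmul_eq_mul, ← mul_sum, sum_boole,
      eOut, outDegOn]
    push_cast
    ring
  rw [← hsum]
  refine le_trans (sum_le_sum fun u _ => sum_le_sum fun v _ => ?_) hT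
  by_cases huv : G u v
  · simpa [huv] using inDegOn_sub_inDegOn_le_card_filter hG hδ A u v
  · have hv : (inDegOn G v A : ℝ) ≤ n :=
      (Nat.cast_le.2 (inDegOn_le_card v A)).trans (cast_card_le A)
    simp only [huv, false_and, filter_false, card_empty, Nat.cast_zero, if_false, mul_zero,
      add_zero]
    linarith [mul_nonneg hc (Nat.cast_nonneg (α := ℝ) n), (inDegOn G u A).cast_nonneg (α := ℝ)]

theorem sq_card_mul_card_le_card_cycTriples (hG : IsOriented G)
    (hδ : MinSemidegreeGE G ((1/2 - c) * n)) (hc : 0 ≤ c) (A : Finset (Fin n)) (x : Fin n) :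
    (#{u ∈ A | G u x} : ℝ) ^ 2 * #{u ∈ A | G x u} / 2 ≤
      #(cycTriples G A) + 8 * c * n ^ 3 + 3 * n * eOut G {u ∈ A | G x u} {u ∈ A | G u x} := by
  set I := {u ∈ A | G u x}
  set O := {u ∈ A | G x u}
  have hIA : I ⊆ A := filter_subset _ _
  have hOA : O ⊆ A := filter_subset _ _
  have hcount := card_mul_sum_inDegOn_sub_le_card_cycTriples hG hδ hc hIA hOA
  have hO : (eOut G I O : ℝ) ≤ ∑ v ∈ O, (inDegOn G v A : ℝ) := by
    rw [eOut_eq_sum_inDegOn]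
    push_cast
    exact sum_le_sum fun v _ => by exact_mod_cast inDegOn_mono v hIA
  have hI : ∑ u ∈ I, (inDegOn G u A : ℝ) ≤ eOut G I I + eOut G O I + 2 * c * n * #I := by
    rw [eOut_eq_sum_inDegOn I I, eOut_eq_sum_inDegOn O I]
    push_cast
    have := sum_le_sum fun u (_ : u ∈ I) => inDegOn_le_inDegOn_nbrs_add hG hδ A x u
    simpa only [sum_add_distrib, sum_const, nsmul_eq_mul, mul_comm] using this
  have hIO := card_mul_sub_le_eOut_add_eOut hG hδ I O
  have hII : 2 * (eOut G I I : ℝ) ≤ #I ^ 2 := by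
    have := eOut_add_eOut_le hG I I
    rw [← sq, ← two_mul] at this
    exact_mod_cast this
  have hi0 : (0 : ℝ) ≤ #I := Nat.cast_nonneg _
  have ho0 : (0 : ℝ) ≤ #O := Nat.cast_nonneg _
  have hn0 : (0 : ℝ) ≤ n := Nat.cast_nonneg _
  have hR0 : (0 : ℝ) ≤ eOut G O I := Nat.cast_nonneg _
  have hcn : 0 ≤ c * n := mul_nonneg hc hn0
  have hii : (#I : ℝ) * #I ≤ n * n := mul_le_mul (cast_card_le I) (cast_card_le I) hi0 hn0
  have hio : (#I : ℝ) * #O ≤ n * n := mul_le_mul (cast_card_le I) (cast_card_le O) ho0 hn0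
  linarith [mul_le_mul_of_nonneg_left hO hi0, mul_le_mul_of_nonneg_left hI ho0,
    mul_le_mul_of_nonneg_left hIO (add_nonneg hi0 hn0), mul_le_mul_of_nonneg_left hII ho0,
    mul_le_mul_of_nonneg_left hii hcn, mul_le_mul_of_nonneg_left hio hcn,
    mul_le_mul_of_nonneg_left (cast_card_le I) (mul_nonneg hcn hn0),
    mul_le_mul_of_nonneg_right (cast_card_le I) hR0,
    mul_le_mul_of_nonneg_right (cast_card_le O) hR0]

theorem mul_sq_le_eOut_outNbrs_inNbrs (hG : IsOriented G)
    (hδ : MinSemidegreeGE G ((1/2 - c) * n)) (hn : 0 < n) (hβ : 0 < β) (hβ1 : β ≤ 1)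
    (hc : 0 ≤ c) (hcβ : c ≤ β ^ 4 / 1000) (hαβ : α ≤ β ^ 4 / 1000) {A : Finset (Fin n)}
    (hT : (#(cycTriples G A) : ℝ) ≤ α * n ^ 3) {x : Fin n}
    (hin : (inDegOn G x A : ℝ) < #A - β * n) (hout : (outDegOn G x A : ℝ) < #A - β * n) :
    β ^ 3 / 100 * n ^ 2 ≤ eOut G {u ∈ A | G x u} {u ∈ A | G u x} := by
  have hβ43 : β ^ 4 ≤ β ^ 3 := pow_le_pow_of_le_one hβ.le hβ1 (by norm_num)
  have hβ31 : β ^ 3 ≤ β := pow_le_of_le_one hβ.le hβ1 (by norm_num)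
  have hn0 : (0 : ℝ) < n := Nat.cast_pos.2 hn
  have hdeg : (#A : ℝ) - 2 * c * n ≤ #{u ∈ A | G x u} + #{u ∈ A | G u x} :=
    card_sub_le_outDegOn_add_inDegOn hG hδ x A
  change (#{u ∈ A | G u x} : ℝ) < #A - β * n at hin
  change (#{u ∈ A | G x u} : ℝ) < #A - β * n at hout
  have hI : β * n / 2 ≤ #{u ∈ A | G u x} := by nlinarith
  have hO : β * n / 2 ≤ #{u ∈ A | G x u} := by nlinarith
  have hcube : (β * n / 2) ^ 2 * (β * n / 2) / 2 ≤
      (#{u ∈ A | G u x} : ℝ) ^ 2 * #{u ∈ A | G x u} / 2 := by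
    gcongr
  have key := sq_card_mul_card_le_card_cycTriples hG hδ hc A x
  have hn3 : (0 : ℝ) < n ^ 3 := by positivity
  nlinarith [mul_le_mul_of_nonneg_right hcβ hn3.le, mul_le_mul_of_nonneg_right hβ43 hn3.le]

theorem card_not_strongNbr_le (hG : IsOriented G) (hδ : MinSemidegreeGE G ((1/2 - c) * n))
    (hn : 0 < n) (hβ : 0 < β) (hβ1 : β ≤ 1) (hc : 0 ≤ c) (hcβ : c ≤ β ^ 4 / 1000)
    (hαβ : α ≤ β ^ 4 / 1000) {A : Finset (Fin n)} (hcyc : (cyc3 G A A Aᶜ : ℝ) ≤ α * n ^ 3) :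
    (#{x ∈ Aᶜ | (inDegOn G x A : ℝ) < #A - β * n ∧ (outDegOn G x A : ℝ) < #A - β * n} : ℝ) ≤
      β * n := by
  set S := {x ∈ Aᶜ | (inDegOn G x A : ℝ) < #A - β * n ∧ (outDegOn G x A : ℝ) < #A - β * n}
  have hT : (#(cycTriples G A) : ℝ) ≤ α * n ^ 3 :=
    (Nat.cast_le.2 (card_cycTriples_le_cyc3 hG A)).trans hcyc
  have hS : ∑ x ∈ S, (eOut G {u ∈ A | G x u} {u ∈ A | G u x} : ℝ) ≤ #(cycTriples G A) := by
    rw [← sum_eOut_outNbrs_inNbrs]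
    exact_mod_cast sum_le_sum_of_subset (filter_subset _ _)
  have hlow : (#S : ℝ) * (β ^ 3 / 100 * n ^ 2) ≤
      ∑ x ∈ S, (eOut G {u ∈ A | G x u} {u ∈ A | G u x} : ℝ) := by
    rw [← nsmul_eq_mul, ← sum_const]
    refine sum_le_sum fun x hx => ?_
    obtain ⟨-, hin, hout⟩ := mem_filter.1 hx
    exact mul_sq_le_eOut_outNbrs_inNbrs hG hδ hn hβ hβ1 hc hcβ hαβ hT hin hout
  have hn0 : (0 : ℝ) < n := Nat.cast_pos.2 hn
  have hβn : (0 : ℝ) < β ^ 3 * n ^ 2 := by positivity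
  nlinarith [mul_le_mul_of_nonneg_right hαβ (pow_pos hn0 3).le]

end

theorem stmt_12 :
    ∀ η : ℝ, 0 < η → η < 1 →
    ∃ ξ₀ > (0:ℝ), ∀ ξ : ℝ, 0 < ξ → ξ ≤ ξ₀ →
    ∃ β₀ > (0:ℝ), ∀ β : ℝ, 0 < β → β ≤ β₀ →
    ∃ α₀ > (0:ℝ), ∀ α : ℝ, 0 < α → α ≤ α₀ →
    ∃ c₀ > (0:ℝ), ∀ c : ℝ, 0 < c → c ≤ c₀ →
    ∃ N : ℕ, ∀ n : ℕ, N ≤ n → ∀ G : Fin n → Fin n → Prop, IsOriented G →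
      MinSemidegreeGE G ((1/2 - c) * n) →
      ∀ A : Finset (Fin n), η * n < (A.card : ℝ) → (cyc3 G A A Aᶜ : ℝ) ≤ α * n^3 →
        ((Aᶜ.filter fun x =>
            (inDegOn G x A : ℝ) < (A.card : ℝ) - β * n ∧
            (outDegOn G x A : ℝ) < (A.card : ℝ) - β * n).card : ℝ) ≤ β * n := by
  intro η _ _
  refine ⟨1, one_pos, fun ξ hξ hξ1 => ⟨ξ, hξ, fun β hβ hβξ => ?_⟩⟩
  refine ⟨β ^ 4 / 1000, by positivity, fun α hα hαβ => ⟨α, hα, fun c hc hcα => ?_⟩⟩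
  refine ⟨1, fun n hn G hG hδ A _ hcyc => ?_⟩
  exact card_not_strongNbr_le hG hδ hn hβ (hβξ.trans hξ1) hc.le (hcα.trans hαβ) hαβ hcyc
end
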